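/- Let T² = ℝ²/ℤ² with the flat metrics g_ε scaled by ε² along the line directed by (1,α), α irrational. Then limsup_{ε→0} ln(injrad(T², g_ε))/ln(ε) = 1 - 1/μ(α). -/

import Mathlib

open scoped ENNReal

/-- The irrationality exponent of a real number `α`:
the supremum of exponents `ν` such that `|α - p/q| < 1/q^ν` has infinitely many
integer solutions `(p, q)` with `q ≥ 1`. -/
noncomputable def irrExp (α : ℝ) : ℝ≥0∞ :=
  sSup {m : ℝ≥0∞ | ∃ ν : ℝ, m = ENNReal.ofReal ν ∧
    {pq : ℤ × ℤ | 1 ≤ pq.2 ∧ |α - (pq.1 : ℝ) / (pq.2 : ℝ)| < 1 / (pq.2 : ℝ) ^ ν}.Infinite}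


/-- The norm on `ℝ²` obtained from the standard Euclidean metric by scaling by `ε²`
the component along the line `D = ℝ·(1, α)` and keeping the orthogonal component. -/
noncomputable def normEps (α ε : ℝ) (x : ℝ × ℝ) : ℝ :=
  Real.sqrt ((ε ^ 2 * (x.1 + α * x.2) ^ 2 + (α * x.1 - x.2) ^ 2) / (1 + α ^ 2))

/-- The injectivity radius of the flat torus `(T² = ℝ²/ℤ², g_ε)`: half the length of a
shortest nonzero vector of `ℤ²` for the norm `‖·‖_ε`. -/
noncomputable def injradEps (α ε : ℝ) : ℝ :=
  (1 / 2) * sInf {r : ℝ | ∃ p q : ℤ, (p, q) ≠ (0, 0) ∧ r = normEps α ε ((p : ℝ), (q : ℝ))}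

open Filter Real Set Topology

/-!
A nonzero lattice vector `(q, p)` has `g_ε`-length comparable to `max (ε |q|, |q α - p|)`.
For `ν > μ(α)` all but finitely many pairs satisfy `|q α - p| ≥ q ^ (1 - ν)`, and the weighted
AM–GM inequality then bounds that maximum below by a multiple of `ε ^ (1 - 1/ν)`. For `ν < μ(α)`
each of the infinitely many approximations `|α - p/q| < q ^ (-ν)` gives, at `ε = |α - p/q|`,
a lattice vector of length `≲ q ε ≤ ε ^ (1 - 1/ν)`. So `1 - 1/ν` bounds the lim sup from above
for every `ν > μ(α)` and from below for every `ν < μ(α)`.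
-/

-- `irrExp α` is the supremum of the `ν` for which this set is infinite.
def goodApproximants (α ν : ℝ) : Set (ℤ × ℤ) :=
  {pq | 1 ≤ pq.2 ∧ |α - (pq.1 : ℝ) / (pq.2 : ℝ)| < 1 / (pq.2 : ℝ) ^ ν}

section LogRatio

variable {r : ℝ → ℝ} {C θ η : ℝ}

theorem eventually_log_div_log_le (hC : 0 < C) (h : ∀ᶠ ε in 𝓝[>] 0, C * ε ^ θ ≤ r ε)
    (hη : 0 < η) : ∀ᶠ ε in 𝓝[>] 0, log (r ε) / log ε ≤ θ + η := by
  filter_upwards [h, eventually_mem_nhdsWithin,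
    tendsto_log_nhdsGT_zero.eventually (eventually_lt_atBot (min 0 (log C / η)))]
    with ε hr hε hlog
  have hlog0 : log ε < 0 := hlog.trans_le (min_le_left _ _)
  have hηlog : log ε * η < log C := (lt_div_iff₀ hη).1 (hlog.trans_le (min_le_right _ _))
  have hlogr : log C + θ * log ε ≤ log (r ε) := by
    rw [← log_rpow hε, ← log_mul hC.ne' (rpow_pos_of_pos hε θ).ne']
    exact log_le_log (mul_pos hC (rpow_pos_of_pos hε θ)) hr
  rw [div_le_iff_of_neg hlog0]
  linarith

theorem frequently_le_log_div_log (hC : 0 < C) (hpos : ∀ᶠ ε in 𝓝[>] 0, 0 < r ε)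
    (h : ∃ᶠ ε in 𝓝[>] 0, r ε ≤ C * ε ^ θ) (hη : 0 < η) :
    ∃ᶠ ε in 𝓝[>] 0, θ - η ≤ log (r ε) / log ε := by
  have hev : ∀ᶠ ε in 𝓝[>] 0, 0 < r ε ∧ 0 < ε ∧ log ε < min 0 (-log C / η) :=
    hpos.and (eventually_mem_nhdsWithin.and
      (tendsto_log_nhdsGT_zero.eventually (eventually_lt_atBot _)))
  refine (h.and_eventually hev).mono fun ε ⟨hr, hr0, hε, hlog⟩ => ?_
  have hlog0 : log ε < 0 := hlog.trans_le (min_le_left _ _)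
  have hηlog : log ε * η < -log C := (lt_div_iff₀ hη).1 (hlog.trans_le (min_le_right _ _))
  have hlogr : log (r ε) ≤ log C + θ * log ε := by
    rw [← log_rpow hε, ← log_mul hC.ne' (rpow_pos_of_pos hε θ).ne']
    exact log_le_log hr0 hr
  rw [le_div_iff_of_neg hlog0]
  linarith

theorem limsup_log_div_log_le (hC : 0 < C) (h : ∀ᶠ ε in 𝓝[>] 0, C * ε ^ θ ≤ r ε)
    (hr1 : ∀ᶠ ε in 𝓝[>] 0, r ε ≤ 1) :
    limsup (fun ε => log (r ε) / log ε) (𝓝[>] 0) ≤ θ := by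
  have hnonneg : ∀ᶠ ε in 𝓝[>] 0, 0 ≤ log (r ε) / log ε := by
    filter_upwards [h, hr1, Ioo_mem_nhdsGT one_pos] with ε hr hr1 hε
    exact div_nonneg_of_nonpos
      (log_nonpos ((mul_pos hC (rpow_pos_of_pos hε.1 θ)).le.trans hr) hr1)
      (log_nonpos hε.1.le hε.2.le)
  refine le_of_forall_pos_le_add fun η hη => ?_
  exact limsup_le_of_le (isCoboundedUnder_le_of_eventually_le _ hnonneg)
    (eventually_log_div_log_le hC h hη)

theorem le_limsup_log_div_log (hC : 0 < C) (hpos : ∀ᶠ ε in 𝓝[>] 0, 0 < r ε)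
    (h : ∃ᶠ ε in 𝓝[>] 0, r ε ≤ C * ε ^ θ)
    (hbdd : IsBoundedUnder (· ≤ ·) (𝓝[>] 0) fun ε => log (r ε) / log ε) :
    θ ≤ limsup (fun ε => log (r ε) / log ε) (𝓝[>] 0) :=
  le_of_forall_pos_le_add fun _ hη => by
    linarith [le_limsup_of_frequently_le (frequently_le_log_div_log hC hpos h hη) hbdd]

end LogRatio

section NormEps

variable {α ε : ℝ}

theorem mul_norm_le_normEps (hε0 : 0 ≤ ε) (hε1 : ε ≤ 1) (x : ℝ × ℝ) :
    ε * ‖x‖ ≤ normEps α ε x := by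
  have hsq : (ε * x.1) ^ 2 + (ε * x.2) ^ 2 ≤
      (ε ^ 2 * (x.1 + α * x.2) ^ 2 + (α * x.1 - x.2) ^ 2) / (1 + α ^ 2) := by
    rw [le_div_iff₀ (by positivity)]
    nlinarith [mul_nonneg (sub_nonneg.2 (pow_le_one₀ (n := 2) hε0 hε1)) (sq_nonneg (α * x.1 - x.2))]
  have h1 := abs_le_sqrt (x := ε * x.1) (hsq.trans' (by nlinarith [sq_nonneg (ε * x.2)]))
  have h2 := abs_le_sqrt (x := ε * x.2) (hsq.trans' (by nlinarith [sq_nonneg (ε * x.1)]))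
  rw [abs_mul, abs_of_nonneg hε0] at h1 h2
  rw [Prod.norm_def, mul_max_of_nonneg _ _ hε0, Real.norm_eq_abs, Real.norm_eq_abs]
  exact max_le h1 h2

theorem abs_sub_div_le_normEps (x : ℝ × ℝ) :
    |α * x.1 - x.2| / √(1 + α ^ 2) ≤ normEps α ε x := by
  rw [← sqrt_sq_eq_abs, ← sqrt_div (sq_nonneg _)]
  exact sqrt_le_sqrt (div_le_div_of_nonneg_right (by nlinarith [sq_nonneg (x.1 + α * x.2)])
    (by positivity))

theorem normEps_le (hε0 : 0 ≤ ε) (hε1 : ε ≤ 1) (x : ℝ × ℝ) :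
    normEps α ε x ≤ (1 + α ^ 2) * (ε * |x.1|) + (1 + |α|) * |α * x.1 - x.2| := by
  set u := x.1 + α * x.2
  set v := α * x.1 - x.2
  have hu : |u| ≤ (1 + α ^ 2) * |x.1| + |α| * |v| := by
    calc |u| = |(1 + α ^ 2) * x.1 - α * v| := by congr 1; ring
    _ ≤ |(1 + α ^ 2) * x.1| + |α * v| := abs_sub _ _
    _ = (1 + α ^ 2) * |x.1| + |α| * |v| := by
      rw [abs_mul, abs_mul, abs_of_pos (by positivity : (0 : ℝ) < 1 + α ^ 2)]
  have hsqrt : normEps α ε x ≤ ε * |u| + |v| := by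
    rw [normEps, sqrt_le_left (by positivity)]
    calc (ε ^ 2 * u ^ 2 + v ^ 2) / (1 + α ^ 2) ≤ ε ^ 2 * u ^ 2 + v ^ 2 :=
          div_le_self (by positivity) (by nlinarith [sq_nonneg α])
    _ ≤ (ε * |u| + |v|) ^ 2 := by
          nlinarith [sq_abs u, sq_abs v, mul_nonneg (mul_nonneg hε0 (abs_nonneg u)) (abs_nonneg v)]
  calc normEps α ε x ≤ ε * |u| + |v| := hsqrt
  _ ≤ ε * ((1 + α ^ 2) * |x.1| + |α| * |v|) + |v| := by gcongr
  _ ≤ (1 + α ^ 2) * (ε * |x.1|) + (1 + |α|) * |v| := by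
        nlinarith [mul_nonneg (sub_nonneg.2 hε1) (mul_nonneg (abs_nonneg α) (abs_nonneg v))]

end NormEps

section Lattice

variable {α ε : ℝ}

theorem one_le_norm_intCast_prod {m n : ℤ} (h : (m, n) ≠ (0, 0)) :
    1 ≤ ‖((m : ℝ), (n : ℝ))‖ := by
  rw [Prod.norm_mk, Real.norm_eq_abs, Real.norm_eq_abs]
  rcases eq_or_ne m 0 with rfl | hm
  · have hn : n ≠ 0 := by rintro rfl; exact h rfl
    exact le_max_of_le_right (by exact_mod_cast Int.one_le_abs hn)
  · exact le_max_of_le_left (by exact_mod_cast Int.one_le_abs hm)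

theorem injradEps_le (α ε : ℝ) {m n : ℤ} (h : (m, n) ≠ (0, 0)) :
    injradEps α ε ≤ normEps α ε ((m : ℝ), (n : ℝ)) / 2 := by
  have hbdd : BddBelow
      {r : ℝ | ∃ p q : ℤ, (p, q) ≠ (0, 0) ∧ r = normEps α ε ((p : ℝ), (q : ℝ))} :=
    ⟨0, by rintro _ ⟨p, q, -, rfl⟩; exact sqrt_nonneg _⟩
  rw [injradEps]
  linarith [csInf_le hbdd ⟨m, n, h, rfl⟩]

theorem le_injradEps {b : ℝ}
    (h : ∀ m n : ℤ, (m, n) ≠ (0, 0) → b ≤ normEps α ε ((m : ℝ), (n : ℝ))) :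
    b / 2 ≤ injradEps α ε := by
  have hne : {r : ℝ | ∃ p q : ℤ, (p, q) ≠ (0, 0) ∧ r = normEps α ε ((p : ℝ), (q : ℝ))}.Nonempty :=
    ⟨_, 1, 0, by simp, rfl⟩
  rw [injradEps]
  linarith [le_csInf hne fun r ⟨m, n, hmn, hr⟩ => hr ▸ h m n hmn]

theorem half_le_injradEps (hε0 : 0 ≤ ε) (hε1 : ε ≤ 1) : ε / 2 ≤ injradEps α ε :=
  le_injradEps fun _ _ h => by
    simpa using (mul_le_mul_of_nonneg_left (one_le_norm_intCast_prod h) hε0).trans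
      (mul_norm_le_normEps hε0 hε1 _)

theorem injradEps_le_half (hε0 : 0 ≤ ε) (hε1 : ε ≤ 1) : injradEps α ε ≤ 1 / 2 := by
  have h : normEps α ε (0, 1) ≤ 1 := by
    rw [normEps, sqrt_le_left zero_le_one, div_le_iff₀ (by positivity)]
    nlinarith [pow_le_one₀ (n := 2) hε0 hε1, sq_nonneg α]
  have := injradEps_le α ε (m := 0) (n := 1) (by simp)
  push_cast at this
  linarith

end Lattice

section Diophantine

variable {α ν : ℝ}

theorem goodApproximants_antitone (α : ℝ) : Antitone (goodApproximants α) := by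
  rintro ν ν' hνν' ⟨p, q⟩ ⟨hq, h⟩
  have hq' : (1 : ℝ) ≤ q := by exact_mod_cast hq
  exact ⟨hq, h.trans_le (one_div_le_one_div_of_le (rpow_pos_of_pos (by linarith) ν)
    (rpow_le_rpow_of_exponent_le hq' hνν'))⟩

theorem infinite_goodApproximants_two (hα : Irrational α) : (goodApproximants α 2).Infinite := by
  have hinj : Function.Injective fun q : ℚ => (q.num, (q.den : ℤ)) := fun q r h => by
    simp only [Prod.mk.injEq, Nat.cast_inj] at h
    exact Rat.ext h.1 h.2
  refine ((infinite_rat_abs_sub_lt_one_div_den_sq_of_irrational hα).image hinj.injOn).mono ?_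
  rintro _ ⟨q, hq, rfl⟩
  refine ⟨by simp [Nat.one_le_iff_ne_zero], ?_⟩
  simpa only [Int.cast_natCast, ← Rat.cast_def, rpow_two] using hq.out

theorem two_le_irrExp (hα : Irrational α) : 2 ≤ irrExp α :=
  le_sSup ⟨2, by simp, infinite_goodApproximants_two hα⟩

theorem finite_goodApproximants_of_irrExp_lt (h : irrExp α < ENNReal.ofReal ν) :
    (goodApproximants α ν).Finite :=
  not_infinite.1 fun hinf => h.not_ge (le_sSup ⟨ν, rfl, hinf⟩)

theorem infinite_goodApproximants_of_lt_irrExp (h : ENNReal.ofReal ν < irrExp α) :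
    (goodApproximants α ν).Infinite := by
  obtain ⟨_, ⟨ν', rfl, hinf⟩, hlt⟩ := lt_sSup_iff.1 h
  exact hinf.mono (goodApproximants_antitone α (ENNReal.ofReal_lt_ofReal_iff'.1 hlt).1.le)

theorem exists_pos_mul_rpow_le_abs_mul_sub (hα : Irrational α)
    (hfin : (goodApproximants α ν).Finite) :
    ∃ C > 0, ∀ p q : ℤ, q ≠ 0 → C * |(q : ℝ)| ^ (1 - ν) ≤ |q * α - p| := by
  set w : ℤ × ℤ → ℝ := fun pq => |pq.2 * α - pq.1| / (pq.2 : ℝ) ^ (1 - ν)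
  have hw : ∀ pq ∈ goodApproximants α ν, 0 < w pq := fun pq ⟨hq, _⟩ =>
    div_pos (abs_pos.2 ((hα.intCast_mul (by omega)).sub_intCast pq.1).ne_zero)
      (rpow_pos_of_pos (by exact_mod_cast hq) _)
  obtain ⟨C, hC, hCw⟩ : ∃ C > 0, ∀ pq ∈ goodApproximants α ν, C ≤ w pq := by
    rcases (goodApproximants α ν).eq_empty_or_nonempty with h | h
    · exact ⟨1, one_pos, by simp [h]⟩
    · obtain ⟨pq, hpq, hmin⟩ := exists_min_image _ w hfin h
      exact ⟨w pq, hw pq hpq, hmin⟩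
  have hpos : ∀ p q : ℤ, 1 ≤ q → min C 1 * (q : ℝ) ^ (1 - ν) ≤ |q * α - p| := by
    intro p q hq
    have hq0 : (0 : ℝ) < q := by exact_mod_cast hq
    by_cases hmem : (p, q) ∈ goodApproximants α ν
    · calc min C 1 * (q : ℝ) ^ (1 - ν) ≤ w (p, q) * (q : ℝ) ^ (1 - ν) := by
            gcongr
            exact (min_le_left _ _).trans (hCw _ hmem)
      _ = |q * α - p| := div_mul_cancel₀ _ (rpow_pos_of_pos hq0 _).ne'
    · have hfar : 1 / (q : ℝ) ^ ν ≤ |α - p / q| := not_lt.1 fun h => hmem ⟨hq, h⟩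
      calc min C 1 * (q : ℝ) ^ (1 - ν) ≤ q * (1 / (q : ℝ) ^ ν) := by
            rw [rpow_sub hq0, rpow_one, mul_one_div]
            exact mul_le_of_le_one_left (by positivity) (min_le_right _ _)
      _ ≤ q * |α - p / q| := by gcongr
      _ = |q * α - p| := by
            rw [← abs_of_pos hq0, ← abs_mul, abs_of_pos hq0, mul_sub, mul_div_cancel₀ _ hq0.ne']
  refine ⟨min C 1, lt_min hC one_pos, fun p q hq => ?_⟩
  rcases hq.lt_or_gt with hq | hq
  · have hq' : (q : ℝ) < 0 := by exact_mod_cast hq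
    have := hpos (-p) (-q) (by omega)
    push_cast at this
    rwa [abs_of_neg hq', show -(q : ℝ) * α - -p = -(q * α - p) by ring, abs_neg] at *
  · simpa [abs_of_pos (by exact_mod_cast hq : (0 : ℝ) < q)] using hpos p q hq

theorem exists_mem_goodApproximants_lt_snd (hν : 0 ≤ ν)
    (hinf : (goodApproximants α ν).Infinite) (N : ℤ) :
    ∃ pq ∈ goodApproximants α ν, N < pq.2 := by
  by_contra! hN
  refine hinf (((isCompact_closedBall (0 : ℤ × ℤ) (N * (|α| + 1))).finite_of_discrete).subset ?_)
  rintro ⟨p, q⟩ ⟨hq, hpq⟩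
  have hq0 : (0 : ℝ) < q := by exact_mod_cast hq
  have hqN : (q : ℝ) ≤ N := by exact_mod_cast hN _ ⟨hq, hpq⟩
  have hp : |(p : ℝ)| ≤ q * (|α| + 1) := by
    have h1 : |α - p / q| ≤ 1 := hpq.le.trans
      (div_le_one_of_le₀ (one_le_rpow (by exact_mod_cast hq) hν) (by positivity))
    have h2 : |(p : ℝ) / q| ≤ |α| + 1 := by
      have := abs_sub_abs_le_abs_sub ((p : ℝ) / q) α
      rw [abs_sub_comm] at this
      linarith
    rwa [abs_div, abs_of_pos hq0, div_le_iff₀' hq0] at h2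
  rw [mem_closedBall_zero_iff, Prod.norm_mk, Int.norm_eq_abs, Int.norm_eq_abs, abs_of_pos hq0]
  exact max_le (hp.trans (by gcongr)) (by nlinarith [mul_nonneg (hq0.le.trans hqN) (abs_nonneg α)])

end Diophantine

theorem rpow_mul_rpow_le_max {a b ε ν : ℝ} (ha : 0 < a) (hb : 0 < b) (hε : 0 ≤ ε) (hν : 1 ≤ ν) :
    b ^ (1 / ν) * ε ^ (1 - 1 / ν) ≤ max (ε * a) (b * a ^ (1 - ν)) := by
  have hν0 : 0 < ν := by linarith
  have hw : 0 ≤ 1 - 1 / ν := sub_nonneg.2 ((div_le_one hν0).2 hν)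
  have ha1 : a ^ (1 - 1 / ν) * a ^ ((1 - ν) * (1 / ν)) = 1 := by
    rw [← rpow_add ha, show 1 - 1 / ν + (1 - ν) * (1 / ν) = 0 by field_simp; ring, rpow_zero]
  calc b ^ (1 / ν) * ε ^ (1 - 1 / ν)
      = (ε * a) ^ (1 - 1 / ν) * (b * a ^ (1 - ν)) ^ (1 / ν) := by
        rw [mul_rpow hε ha.le, mul_rpow hb.le (rpow_nonneg ha.le _), ← rpow_mul ha.le]
        linear_combination (-(b ^ (1 / ν) * ε ^ (1 - 1 / ν))) * ha1
    _ ≤ (1 - 1 / ν) * (ε * a) + 1 / ν * (b * a ^ (1 - ν)) :=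
        geom_mean_le_arith_mean2_weighted hw (by positivity) (by positivity) (by positivity)
          (by ring)
    _ ≤ (1 - 1 / ν) * max (ε * a) (b * a ^ (1 - ν)) + 1 / ν * max (ε * a) (b * a ^ (1 - ν)) := by
        gcongr
        exacts [le_max_left _ _, le_max_right _ _]
    _ = max (ε * a) (b * a ^ (1 - ν)) := by ring

section InjradBounds

variable {α ν : ℝ}

theorem exists_pos_mul_rpow_le_injradEps (hα : Irrational α) (hν : 1 ≤ ν)
    (hfin : (goodApproximants α ν).Finite) :
    ∃ K > 0, ∀ ε, 0 < ε → ε ≤ 1 → K * ε ^ (1 - 1 / ν) ≤ injradEps α ε := by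
  obtain ⟨C, hC, hdioph⟩ := exists_pos_mul_rpow_le_abs_mul_sub hα hfin
  have hs : 0 < √(1 + α ^ 2) := sqrt_pos.2 (by positivity)
  set K := min ((C / √(1 + α ^ 2)) ^ (1 / ν)) (1 / √(1 + α ^ 2))
  refine ⟨K / 2, by positivity, fun ε hε0 hε1 => ?_⟩
  have hθ : 0 ≤ 1 - 1 / ν := sub_nonneg.2 ((div_le_one (by linarith)).2 hν)
  suffices h : ∀ m n : ℤ, (m, n) ≠ (0, 0) → K * ε ^ (1 - 1 / ν) ≤ normEps α ε (m, n) by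
    linarith [le_injradEps h]
  intro m n hmn
  have horth := abs_sub_div_le_normEps (α := α) (ε := ε) ((m : ℝ), (n : ℝ))
  rcases eq_or_ne m 0 with rfl | hm
  · have hn : (1 : ℝ) ≤ |(n : ℝ)| := by
      have hn0 : n ≠ 0 := by rintro rfl; exact hmn rfl
      exact_mod_cast Int.one_le_abs hn0
    calc K * ε ^ (1 - 1 / ν) ≤ 1 / √(1 + α ^ 2) * 1 :=
          mul_le_mul (min_le_right _ _) (rpow_le_one hε0.le hε1 hθ) (by positivity)
            (by positivity)
      _ ≤ normEps α ε (((0 : ℤ) : ℝ), (n : ℝ)) := by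
          refine le_trans ?_ horth
          rw [mul_one, Int.cast_zero, mul_zero, zero_sub, abs_neg]
          gcongr
  · have hm0 : 0 < |(m : ℝ)| := by positivity
    have hfst : |(m : ℝ)| ≤ ‖((m : ℝ), (n : ℝ))‖ := by
      rw [Prod.norm_mk, Real.norm_eq_abs]
      exact le_max_left _ _
    calc K * ε ^ (1 - 1 / ν) ≤ (C / √(1 + α ^ 2)) ^ (1 / ν) * ε ^ (1 - 1 / ν) := by
          gcongr
          exact min_le_left _ _
      _ ≤ max (ε * |(m : ℝ)|) (C / √(1 + α ^ 2) * |(m : ℝ)| ^ (1 - ν)) :=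
          rpow_mul_rpow_le_max hm0 (by positivity) hε0.le hν
      _ ≤ normEps α ε (m, n) := by
          refine max_le ((mul_le_mul_of_nonneg_left hfst hε0.le).trans
            (mul_norm_le_normEps hε0.le hε1 _)) (le_trans ?_ horth)
          rw [div_mul_eq_mul_div, mul_comm α]
          gcongr
          exact hdioph n m hm

theorem frequently_injradEps_le (hα : Irrational α) (hν : 1 ≤ ν)
    (hinf : (goodApproximants α ν).Infinite) :
    ∃ᶠ ε in 𝓝[>] 0, injradEps α ε ≤ (2 + α ^ 2 + |α|) / 2 * ε ^ (1 - 1 / ν) := by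
  have hν0 : 0 < ν := by linarith
  rw [(nhdsGT_basis 0).frequently_iff]
  intro δ hδ
  obtain ⟨N, hN⟩ := eventually_atTop.1 (((tendsto_rpow_neg_atTop hν0).comp
    tendsto_intCast_atTop_atTop).eventually (gt_mem_nhds hδ))
  obtain ⟨⟨p, q⟩, ⟨hq, hpq⟩, hNq⟩ := exists_mem_goodApproximants_lt_snd hν0.le hinf N
  dsimp only at hq hpq hNq
  have hq0 : (0 : ℝ) < q := by exact_mod_cast hq
  set ε := |α - p / q|
  have hqε : q * ε = |q * α - p| := by
    rw [show (q : ℝ) * α - p = q * (α - p / q) by field_simp, abs_mul, abs_of_pos hq0]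
  have hε0 : 0 < ε := by
    have := abs_pos.2 ((hα.intCast_mul (by omega : q ≠ 0)).sub_intCast p).ne_zero
    rw [← hqε] at this
    exact pos_of_mul_pos_right this hq0.le
  have hεq : ε < (q : ℝ) ^ (-ν) := by rwa [rpow_neg hq0.le, ← one_div]
  have hε1 : ε ≤ 1 :=
    hεq.le.trans (rpow_le_one_of_one_le_of_nonpos (by exact_mod_cast hq) (by linarith))
  refine ⟨ε, ⟨hε0, hεq.trans (hN q hNq.le)⟩, ?_⟩
  have hqθ : q * ε ≤ ε ^ (1 - 1 / ν) := by
    have hqle : (q : ℝ) ≤ ε ^ (-(1 / ν)) := by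
      calc (q : ℝ) = ((q : ℝ) ^ (-ν)) ^ (-(1 / ν)) := by
            rw [← rpow_mul hq0.le, show -ν * -(1 / ν) = 1 by field_simp, rpow_one]
        _ ≤ ε ^ (-(1 / ν)) := rpow_le_rpow_of_nonpos hε0 hεq.le (by simp [hν0.le])
    calc q * ε ≤ ε ^ (-(1 / ν)) * ε := by gcongr
      _ = ε ^ (1 - 1 / ν) := by rw [← rpow_add_one hε0.ne']; ring_nf
  have hqp : (q, p) ≠ (0, 0) := by
    simp only [ne_eq, Prod.mk.injEq, not_and]
    omega
  calc injradEps α ε ≤ normEps α ε (q, p) / 2 := injradEps_le α ε hqp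
    _ ≤ ((1 + α ^ 2) * (ε * |(q : ℝ)|) + (1 + |α|) * |α * q - p|) / 2 := by
        gcongr
        exact normEps_le hε0.le hε1 _
    _ = (2 + α ^ 2 + |α|) / 2 * (q * ε) := by rw [abs_of_pos hq0, mul_comm α, ← hqε]; ring
    _ ≤ (2 + α ^ 2 + |α|) / 2 * ε ^ (1 - 1 / ν) := by gcongr

theorem eventually_half_mul_le_injradEps (α : ℝ) :
    ∀ᶠ ε in 𝓝[>] 0, 1 / 2 * ε ^ (1 : ℝ) ≤ injradEps α ε := by
  filter_upwards [Ioc_mem_nhdsGT one_pos] with ε hε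
  rw [rpow_one]
  linarith [half_le_injradEps (α := α) hε.1.le hε.2]

theorem eventually_injradEps_le_one (α : ℝ) : ∀ᶠ ε in 𝓝[>] 0, injradEps α ε ≤ 1 := by
  filter_upwards [Ioc_mem_nhdsGT one_pos] with ε hε
  linarith [injradEps_le_half (α := α) hε.1.le hε.2]

theorem limsup_log_injradEps_le_one (α : ℝ) :
    limsup (fun ε => log (injradEps α ε) / log ε) (𝓝[>] 0) ≤ 1 :=
  limsup_log_div_log_le one_half_pos (eventually_half_mul_le_injradEps α)
    (eventually_injradEps_le_one α)

theorem limsup_log_injradEps_le (hα : Irrational α) (hν : 1 ≤ ν)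
    (h : irrExp α < ENNReal.ofReal ν) :
    limsup (fun ε => log (injradEps α ε) / log ε) (𝓝[>] 0) ≤ 1 - 1 / ν := by
  obtain ⟨K, hK, hKle⟩ :=
    exists_pos_mul_rpow_le_injradEps hα hν (finite_goodApproximants_of_irrExp_lt h)
  refine limsup_log_div_log_le hK ?_ (eventually_injradEps_le_one α)
  filter_upwards [Ioc_mem_nhdsGT one_pos] with ε hε using hKle ε hε.1 hε.2

theorem le_limsup_log_injradEps (hα : Irrational α) (hν : 1 ≤ ν)
    (h : ENNReal.ofReal ν < irrExp α) :
    1 - 1 / ν ≤ limsup (fun ε => log (injradEps α ε) / log ε) (𝓝[>] 0) := by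
  have hpos : ∀ᶠ ε in 𝓝[>] 0, 0 < injradEps α ε := by
    filter_upwards [eventually_half_mul_le_injradEps α, eventually_mem_nhdsWithin] with ε hε hε0
    exact (mul_pos one_half_pos (rpow_pos_of_pos hε0 _)).trans_le hε
  exact le_limsup_log_div_log (by positivity) hpos
    (frequently_injradEps_le hα hν (infinite_goodApproximants_of_lt_irrExp h))
    (isBoundedUnder_of_eventually_le
      (eventually_log_div_log_le one_half_pos (eventually_half_mul_le_injradEps α) one_pos))

end InjradBounds

theorem eq_one_sub_toReal_inv_of_bounds {μ : ℝ≥0∞} (hμ : 1 < μ) {L : ℝ} (hL : L ≤ 1)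
    (hup : ∀ ν : ℝ, 1 ≤ ν → μ < ENNReal.ofReal ν → L ≤ 1 - 1 / ν)
    (hlow : ∀ ν : ℝ, 1 ≤ ν → ENNReal.ofReal ν < μ → 1 - 1 / ν ≤ L) :
    L = 1 - μ⁻¹.toReal := by
  set m := μ⁻¹.toReal
  have hm : μ⁻¹ = ENNReal.ofReal m :=
    (ENNReal.ofReal_toReal (ENNReal.inv_ne_top.2 (zero_lt_one.trans hμ).ne')).symm
  have hm1 : m < 1 := ENNReal.toReal_lt_of_lt_ofReal (by simpa using ENNReal.inv_lt_one.2 hμ)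
  have hofReal : ∀ t : ℝ, 0 < t → ENNReal.ofReal (1 / t) = (ENNReal.ofReal t)⁻¹ := fun t ht => by
    rw [one_div, ENNReal.ofReal_inv_of_pos ht]
  apply le_antisymm
  · suffices m ≤ 1 - L by linarith
    refine le_of_forall_lt_imp_le_of_dense fun t ht => ?_
    rcases le_or_gt t 0 with ht0 | ht0
    · linarith
    have := hup (1 / t) (one_le_one_div ht0 (ht.trans hm1).le) (by
      rw [hofReal t ht0, ENNReal.lt_inv_iff_lt_inv, hm]
      exact (ENNReal.ofReal_lt_ofReal_iff (ht0.trans ht)).2 ht)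
    rw [one_div_one_div] at this
    linarith
  · suffices 1 - L ≤ m by linarith
    refine le_of_forall_gt_imp_ge_of_dense fun s hs => ?_
    obtain ⟨t, hmt, hts⟩ := exists_between (lt_min hs hm1)
    have ht0 : 0 < t := ENNReal.toReal_nonneg.trans_lt hmt
    have := hlow (1 / t) (one_le_one_div ht0 (hts.le.trans (min_le_right _ _))) (by
      rw [hofReal t ht0, ENNReal.inv_lt_iff_inv_lt, hm]
      exact (ENNReal.ofReal_lt_ofReal_iff ht0).2 hmt)
    rw [one_div_one_div] at this
    linarith [min_le_left s 1]

/-- For the adiabatic collapse `g_ε` of the linear flow of slope `α` (irrational) on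
`T²`, `limsup_{ε→0⁺} ln injrad(T², g_ε) / ln ε = 1 - 1/μ(α)`. -/
theorem stmt_15 (α : ℝ) (hα : Irrational α) :
    Filter.limsup (fun ε : ℝ => Real.log (injradEps α ε) / Real.log ε)
        (nhdsWithin 0 (Set.Ioi 0)) = 1 - ((irrExp α)⁻¹).toReal :=
  eq_one_sub_toReal_inv_of_bounds (ENNReal.one_lt_two.trans_le (two_le_irrExp hα))
    (limsup_log_injradEps_le_one α) (fun _ hν h => limsup_log_injradEps_le hα hν h)
    (fun _ hν h => le_limsup_log_injradEps hα hν h)
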